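/- Assume δ_{k0+1} < 1/√(k0+1). Then lim_{σ²→0} P(k_min = k0) = 1 (equivalently lim_{σ²→0} P(S_{k_min} = S) = 1), and RR(k0) converges to 0 in probability as σ² → 0, i.e., for every ε > 0, lim_{σ²→0} P(RR(k0) < ε) = 1. -/

import Mathlib

open MeasureTheory ProbabilityTheory Filter
open scoped ENNReal NNReal

noncomputable section

namespace RRTPaper

variable {n p : ℕ}

/-- The support of a coefficient vector as a `Finset`. -/
def suppF {p : ℕ} (β : Fin p → ℝ) : Finset (Fin p) :=
  Finset.univ.filter fun j => β j ≠ 0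

/-- `β_min`: the smallest absolute value of `β` on its support. -/
def betaMin {p : ℕ} (β : Fin p → ℝ) : ℝ :=
  sInf ((fun j => |β j|) '' {j | β j ≠ 0})

/-- `β_max`: the largest absolute value of `β` on its support. -/
def betaMax {p : ℕ} (β : Fin p → ℝ) : ℝ :=
  sSup ((fun j => |β j|) '' {j | β j ≠ 0})

/-- The ℓ2 norm of a coefficient vector. -/
def l2norm {p : ℕ} (b : Fin p → ℝ) : ℝ := Real.sqrt (∑ j, (b j) ^ 2)

/-- The design matrix (given by its columns `X j ∈ ℝⁿ`) applied to a coefficient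
vector: `Xb = ∑ j, b j • X j`. -/
def applyX (X : Fin p → EuclideanSpace ℝ (Fin n)) (b : Fin p → ℝ) :
    EuclideanSpace ℝ (Fin n) := ∑ j, b j • X j

/-- The set of admissible restricted isometry constants of order `s`:
`δ ≥ 0` such that `(1−δ)‖b‖₂² ≤ ‖Xb‖₂² ≤ (1+δ)‖b‖₂²` for every `b` with at most `s`
nonzero entries. -/
def ripSet (X : Fin p → EuclideanSpace ℝ (Fin n)) (s : ℕ) : Set ℝ :=
  {δ : ℝ | 0 ≤ δ ∧ ∀ b : Fin p → ℝ, (suppF b).card ≤ s →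
    (1 - δ) * (l2norm b) ^ 2 ≤ ‖applyX X b‖ ^ 2 ∧
      ‖applyX X b‖ ^ 2 ≤ (1 + δ) * (l2norm b) ^ 2}

/-- The restricted isometry constant `δ_s` of order `s` (the smallest admissible `δ`). -/
def RIC (X : Fin p → EuclideanSpace ℝ (Fin n)) (s : ℕ) : ℝ := sInf (ripSet X s)

/-- The OMP support estimate `S_k` after `k` iterations, given the sequence `t` of
selected indices (`t k` is the index selected at iteration `k+1`). -/
def ompSupport {p : ℕ} (t : ℕ → Fin p) (k : ℕ) : Finset (Fin p) :=
  (Finset.range k).image t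

/-- The OMP residual `r^k = y − P_k y`, where `P_k` is the orthogonal projection onto
the span of the columns indexed by `S_k`. -/
def ompResidual (X : Fin p → EuclideanSpace ℝ (Fin n)) (y : EuclideanSpace ℝ (Fin n))
    (t : ℕ → Fin p) (k : ℕ) : EuclideanSpace ℝ (Fin n) :=
  y - ↑(Submodule.orthogonalProjectionOnto (Submodule.span ℝ (X '' ↑(ompSupport t k))) y)

/-- `t` is a valid OMP selection sequence for design `X` and observation `y`:
at every iteration the selected index maximizes the absolute correlation with the
current residual. -/
def IsOMP (X : Fin p → EuclideanSpace ℝ (Fin n)) (y : EuclideanSpace ℝ (Fin n))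
    (t : ℕ → Fin p) : Prop :=
  ∀ k : ℕ, ∀ j : Fin p,
    |(inner ℝ (X j) (ompResidual X y t k) : ℝ)| ≤
      |(inner ℝ (X (t k)) (ompResidual X y t k) : ℝ)|

/-- The residual ratio statistic `RR(k) = ‖r^k‖₂ / ‖r^{k−1}‖₂`. -/
def resRatio (X : Fin p → EuclideanSpace ℝ (Fin n)) (y : EuclideanSpace ℝ (Fin n))
    (t : ℕ → Fin p) (k : ℕ) : ℝ :=
  ‖ompResidual X y t k‖ / ‖ompResidual X y t (k - 1)‖

/-- `k_min`: the first `1 ≤ k ≤ k_max` with `S ⊆ S_k` (`⊤ = ∞` if there is none). -/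
def kmin {p : ℕ} (t : ℕ → Fin p) (β : Fin p → ℝ) (kmax : ℕ) : ℕ∞ :=
  sInf ((fun k : ℕ => (k : ℕ∞)) ''
    {k | 1 ≤ k ∧ k ≤ kmax ∧ suppF β ⊆ ompSupport t k})

/-- The Beta function `B(a,b)`. -/
def betaFun (a b : ℝ) : ℝ := Real.Gamma a * Real.Gamma b / Real.Gamma (a + b)

/-- The CDF of the Beta(a,b) distribution. -/
def betaCDF (a b x : ℝ) : ℝ :=
  (1 / betaFun a b) * ∫ u in (0:ℝ)..x, u ^ (a - 1) * (1 - u) ^ (b - 1)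

/-- The inverse of the Beta(a,b) CDF on (0,1) (as a generalized inverse). -/
def betaICDF (a b z : ℝ) : ℝ := sInf {x : ℝ | 0 ≤ x ∧ z ≤ betaCDF a b x}

/-- The residual ratio threshold `Γ_RRT^α(k)`. -/
def GammaRRT (n p kmax : ℕ) (α : ℝ) (k : ℕ) : ℝ :=
  Real.sqrt (betaICDF (((n : ℝ) - k) / 2) (1 / 2)
    (α / ((kmax : ℝ) * ((p : ℝ) - k + 1))))

/-- `k_RRT = max{1 ≤ k ≤ k_max : RR(k) < Γ_RRT^α(k)}` (`0`, giving `S_RRT = ∅`,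
if the set is empty). -/
def kRRT (X : Fin p → EuclideanSpace ℝ (Fin n)) (y : EuclideanSpace ℝ (Fin n))
    (t : ℕ → Fin p) (kmax : ℕ) (α : ℝ) : ℕ :=
  WithBot.unbotD 0 ((Finset.Icc 1 kmax).filter fun k =>
    resRatio X y t k < GammaRRT n p kmax α k).max

/-- `k_RRM`: the smallest minimizer of `RR(k)` over `1 ≤ k ≤ k_max`. -/
def kRRM (X : Fin p → EuclideanSpace ℝ (Fin n)) (y : EuclideanSpace ℝ (Fin n))
    (t : ℕ → Fin p) (kmax : ℕ) : ℕ :=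
  sInf {k | k ∈ Finset.Icc 1 kmax ∧
    ∀ j ∈ Finset.Icc 1 kmax, resRatio X y t k ≤ resRatio X y t j}

/-- `min_{1 ≤ k ≤ k_max} RR(k)`. -/
def minRR (X : Fin p → EuclideanSpace ℝ (Fin n)) (y : EuclideanSpace ℝ (Fin n))
    (t : ℕ → Fin p) (kmax : ℕ) : ℝ :=
  sInf (resRatio X y t '' Set.Icc 1 kmax)

/-- The adaptive RRT parameter `α* = min(PFD_finite, (min_k RR(k))^q)`. -/
def alphaStar (X : Fin p → EuclideanSpace ℝ (Fin n)) (y : EuclideanSpace ℝ (Fin n))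
    (t : ℕ → Fin p) (kmax : ℕ) (PFD q : ℝ) : ℝ :=
  min PFD (minRR X y t kmax ^ q)

/-- `k_RRTA`: RRT with the adapted parameter `α*`. -/
def kRRTA (X : Fin p → EuclideanSpace ℝ (Fin n)) (y : EuclideanSpace ℝ (Fin n))
    (t : ℕ → Fin p) (kmax : ℕ) (PFD q : ℝ) : ℕ :=
  kRRT X y t kmax (alphaStar X y t kmax PFD q)

/-- `ε_omp` from Lemma 1 of the paper. -/
def epsOMP (X : Fin p → EuclideanSpace ℝ (Fin n)) (β : Fin p → ℝ) (k0 : ℕ) : ℝ :=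
  betaMin β * Real.sqrt (1 - RIC X (k0 + 1)) *
    (1 - Real.sqrt ((k0 : ℝ) + 1) * RIC X (k0 + 1)) /
    (1 + Real.sqrt (1 - RIC X (k0 + 1) ^ 2) - Real.sqrt ((k0 : ℝ) + 1) * RIC X (k0 + 1))

/-- `ε_σ = σ √(n + 2 √(n log n))`. -/
def epsSigma (n : ℕ) (σ : ℝ) : ℝ :=
  σ * Real.sqrt ((n : ℝ) + 2 * Real.sqrt ((n : ℝ) * Real.log (n : ℝ)))

/-- The distribution of the noise vector `w ~ N(0, σ² Iₙ)` on `ℝⁿ`. -/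
def noise (n : ℕ) (σ : ℝ) : Measure (EuclideanSpace ℝ (Fin n)) :=
  (Measure.pi fun _ : Fin n => gaussianReal 0 ⟨σ ^ 2, sq_nonneg σ⟩).map
    (MeasurableEquiv.toLp 2 (Fin n → ℝ))

/-!
Write `S = supp β`. For a partial support `A ⊊ S` the noiseless residual `Xβ - P_A Xβ` equals
`Xu` with `0 ≠ u` supported in `S`, and Mo's two-test-vector argument turns
`δ_{k0+1} √(k0+1) < 1` into a strict gap: some column is more correlated with `Xu` than every
column outside `S \ A` (columns in `A` are orthogonal to the residual). Residuals are continuous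
in the noise `w` and there are finitely many `A`, so on a neighbourhood of `w = 0` every OMP run
picks a new index of `S` at each of its first `k0` steps. There `k_min = k0`, and
`RR(k0) = ‖r^{k0}‖ / ‖r^{k0-1}‖` is small since `r^{k0} → 0` while `r^{k0-1}` stays near a
nonzero noiseless residual. Finally `N(0, σ² Iₙ)` is the image of the standard Gaussian under
`w ↦ σ w`, so the mass it gives to a neighbourhood of `0` tends to `1` as `σ → 0⁺`.
-/

open scoped RealInnerProductSpace Topology

lemma mem_suppF {b : Fin p → ℝ} {j : Fin p} : j ∈ suppF b ↔ b j ≠ 0 := by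
  simp [suppF]

lemma l2norm_sq (b : Fin p → ℝ) : l2norm b ^ 2 = ∑ j, b j ^ 2 :=
  Real.sq_sqrt (by positivity)

lemma sum_sq_pos_of_ne_zero {b : Fin p → ℝ} (hb : b ≠ 0) : 0 < ∑ j, b j ^ 2 := by
  obtain ⟨j, hj⟩ := Function.ne_iff.1 hb
  exact Finset.sum_pos' (fun _ _ => sq_nonneg _) ⟨j, Finset.mem_univ j, pow_two_pos_of_ne_zero hj⟩

lemma sum_abs_sq_le_card_suppF_mul (b : Fin p → ℝ) :
    (∑ j, |b j|) ^ 2 ≤ (suppF b).card * ∑ j, b j ^ 2 := by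
  have hsupp : ∀ f : ℝ → ℝ, f 0 = 0 → ∑ j ∈ suppF b, f (b j) = ∑ j, f (b j) := fun f hf =>
    Finset.sum_filter_of_ne fun j _ h => fun hj => h (by rw [hj, hf])
  rw [← hsupp _ abs_zero, ← hsupp (· ^ 2) (by simp)]
  simpa only [sq_abs] using sq_sum_le_card_mul_sum_sq (s := suppF b) (f := fun j => |b j|)

lemma lt_one_of_mul_sqrt_lt_one {δ : ℝ} {k : ℕ} (hδ : 0 ≤ δ) (h : δ * √((k : ℝ) + 1) < 1) :
    δ < 1 := by
  have : 1 ≤ √((k : ℝ) + 1) := Real.one_le_sqrt.2 (by linarith [k.cast_nonneg (α := ℝ)])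
  nlinarith

/-- Mo's inequality, from the restricted isometry property on the plane of `v = Xu` and a column
`x`, where `N = ‖u‖₂²` and `c = ‖u‖₁`. -/
theorem mul_one_sub_le_norm_sq_sub_mul_abs_inner {E : Type*} [NormedAddCommGroup E]
    [InnerProductSpace ℝ E] {v x : E} {N c δ α : ℝ} (hα : 0 < α) (hδ : 0 ≤ δ)
    (hc : c ^ 2 ≤ (α ^ 2 - 1) * N)
    (hrip : ∀ a b : ℝ, (1 - δ) * (a ^ 2 * N + b ^ 2) ≤ ‖a • v + b • x‖ ^ 2 ∧
      ‖a • v + b • x‖ ^ 2 ≤ (1 + δ) * (a ^ 2 * N + b ^ 2)) :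
    N * (1 - δ * α) ≤ ‖v‖ ^ 2 - c * |⟪x, v⟫| := by
  have hexp : ∀ a b : ℝ, ‖a • v + b • x‖ ^ 2 =
      a ^ 2 * ‖v‖ ^ 2 + 2 * (a * b) * ⟪x, v⟫ + b ^ 2 * ‖x‖ ^ 2 := by
    intro a b
    rw [norm_add_sq_real, norm_smul, norm_smul, real_inner_smul_left, real_inner_smul_right,
      real_inner_comm x v, Real.norm_eq_abs, Real.norm_eq_abs, mul_pow, mul_pow, sq_abs, sq_abs]
    ring
  obtain ⟨s, hs2, hsip⟩ : ∃ s : ℝ, s ^ 2 = c ^ 2 ∧ s * ⟪x, v⟫ = c * |⟪x, v⟫| := by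
    rcases abs_cases ⟪x, v⟫ with ⟨h, -⟩ | ⟨h, -⟩
    · exact ⟨c, rfl, by rw [h]⟩
    · exact ⟨-c, by ring, by rw [h]; ring⟩
  -- Mo's test vectors `(α + 1) u - s e_j` and `(α - 1) u + s e_j`.
  have hlow := (hrip (α + 1) (-s)).1
  have hup := (hrip (α - 1) s).2
  rw [hexp] at hlow hup
  have key : 4 * α * (N * (1 - δ * α)) ≤ 4 * α * (‖v‖ ^ 2 - c * |⟪x, v⟫|) := by
    nlinarith [mul_nonneg hδ (sub_nonneg.2 hc)]
  exact le_of_mul_le_mul_left key (by positivity)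

section applyX

variable (X : Fin p → EuclideanSpace ℝ (Fin n))

lemma applyX_add (a b : Fin p → ℝ) : applyX X (a + b) = applyX X a + applyX X b := by
  simp [applyX, add_smul, Finset.sum_add_distrib]

lemma applyX_smul (c : ℝ) (b : Fin p → ℝ) : applyX X (c • b) = c • applyX X b := by
  simp [applyX, Finset.smul_sum, smul_smul]

lemma applyX_sub (a b : Fin p → ℝ) : applyX X (a - b) = applyX X a - applyX X b := by
  simp [applyX, sub_smul, Finset.sum_sub_distrib]

lemma applyX_single (j : Fin p) (c : ℝ) : applyX X (Pi.single j c) = c • X j := by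
  simp [applyX, Pi.single_apply, ite_smul]

lemma norm_applyX_sq_le (b : Fin p → ℝ) :
    ‖applyX X b‖ ^ 2 ≤ (∑ j, ‖X j‖ ^ 2) * ∑ j, b j ^ 2 := by
  have hnorm : ‖applyX X b‖ ≤ ∑ j, ‖X j‖ * |b j| :=
    (norm_sum_le _ _).trans_eq (by simp [norm_smul, mul_comm])
  calc ‖applyX X b‖ ^ 2 ≤ (∑ j, ‖X j‖ * |b j|) ^ 2 := by gcongr
    _ ≤ (∑ j, ‖X j‖ ^ 2) * ∑ j, |b j| ^ 2 := Finset.sum_mul_sq_le_sq_mul_sq _ _ _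
    _ = (∑ j, ‖X j‖ ^ 2) * ∑ j, b j ^ 2 := by simp only [sq_abs]

lemma ripSet_nonempty (s : ℕ) : (ripSet X s).Nonempty := by
  have hX : 0 ≤ ∑ j, ‖X j‖ ^ 2 := by positivity
  refine ⟨1 + ∑ j, ‖X j‖ ^ 2, by positivity, fun b _ => ⟨?_, ?_⟩⟩
  · nlinarith [sq_nonneg (l2norm b), sq_nonneg ‖applyX X b‖]
  · rw [l2norm_sq]
    nlinarith [norm_applyX_sq_le X b, show 0 ≤ ∑ j, b j ^ 2 by positivity]

lemma exists_mem_ripSet_lt {s : ℕ} {r : ℝ} (h : RIC X s < r) : ∃ δ ∈ ripSet X s, δ < r :=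
  exists_lt_of_csInf_lt (ripSet_nonempty X s) h

lemma applyX_ne_zero_of_mem_ripSet {s : ℕ} {δ : ℝ} (hδ : δ ∈ ripSet X s) (hδ1 : δ < 1)
    {b : Fin p → ℝ} (hb : b ≠ 0) (hcard : (suppF b).card ≤ s) : applyX X b ≠ 0 := by
  have hlow := (hδ.2 b hcard).1
  rw [l2norm_sq] at hlow
  intro h
  rw [h, norm_zero] at hlow
  nlinarith [sum_sq_pos_of_ne_zero hb]

lemma mem_span_image_iff_exists_applyX {A : Finset (Fin p)} {x : EuclideanSpace ℝ (Fin n)} :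
    x ∈ Submodule.span ℝ (X '' ↑A) ↔ ∃ c, suppF c ⊆ A ∧ applyX X c = x := by
  rw [Submodule.mem_span_image_finset_iff_exists_fun']
  constructor
  · rintro ⟨c, rfl⟩
    refine ⟨fun i => if i ∈ A then c i else 0, fun i hi => ?_, ?_⟩
    · by_contra hiA
      simp [mem_suppF, hiA] at hi
    · simp [applyX, ite_smul, Finset.sum_ite_mem]
  · rintro ⟨c, hcA, rfl⟩
    refine ⟨c, Finset.sum_subset (Finset.subset_univ A) fun i _ hi => ?_⟩
    have : c i = 0 := by simpa [mem_suppF] using mt (@hcA i) hi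
    simp [this]

lemma rip_smul_applyX_add_smul {k : ℕ} {δ : ℝ} (hδ : δ ∈ ripSet X (k + 1))
    {u : Fin p → ℝ} (hu : (suppF u).card ≤ k) {j : Fin p} (hj : j ∉ suppF u) (a b : ℝ) :
    (1 - δ) * (a ^ 2 * ∑ i, u i ^ 2 + b ^ 2) ≤ ‖a • applyX X u + b • X j‖ ^ 2 ∧
      ‖a • applyX X u + b • X j‖ ^ 2 ≤ (1 + δ) * (a ^ 2 * ∑ i, u i ^ 2 + b ^ 2) := by
  have huj : u j = 0 := by simpa [mem_suppF] using hj
  have hsupp : suppF (a • u + Pi.single j b) ⊆ insert j (suppF u) := by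
    intro i hi
    rw [Finset.mem_insert, mem_suppF]
    by_cases hij : i = j
    · exact Or.inl hij
    · refine Or.inr fun hui => ?_
      simp [mem_suppF, hui, hij] at hi
  have hl2 : l2norm (a • u + Pi.single j b) ^ 2 = a ^ 2 * ∑ i, u i ^ 2 + b ^ 2 := by
    have hpt : ∀ i, (a • u + Pi.single j b : Fin p → ℝ) i ^ 2 =
        a ^ 2 * u i ^ 2 + (Pi.single j (b ^ 2) : Fin p → ℝ) i := by
      intro i
      by_cases hij : i = j
      · subst hij
        simp [huj]
      · simp [hij, mul_pow]
    rw [l2norm_sq, Finset.sum_congr rfl fun i _ => hpt i, Finset.sum_add_distrib,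
      ← Finset.mul_sum]
    simp
  have happ : applyX X (a • u + Pi.single j b) = a • applyX X u + b • X j := by
    rw [applyX_add, applyX_smul, applyX_single]
  rw [← hl2, ← happ]
  exact hδ.2 _ ((Finset.card_le_card hsupp).trans ((Finset.card_insert_le _ _).trans (by omega)))

theorem exists_abs_inner_applyX_gt {k : ℕ} {δ : ℝ} (hδ : δ ∈ ripSet X (k + 1))
    (hδk : δ * √((k : ℝ) + 1) < 1) {u : Fin p → ℝ} (hu : u ≠ 0) (hcard : (suppF u).card ≤ k) :
    ∃ i, 0 < |⟪X i, applyX X u⟫| ∧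
      ∀ j ∉ suppF u, |⟪X j, applyX X u⟫| < |⟪X i, applyX X u⟫| := by
  set v := applyX X u with hv_def
  have hv : 0 < ‖v‖ ^ 2 := by
    have := applyX_ne_zero_of_mem_ripSet X hδ (lt_one_of_mul_sqrt_lt_one hδ.1 hδk) hu (by omega)
    positivity
  have : Nonempty (Fin p) := ⟨(Function.ne_iff.1 hu).choose⟩
  obtain ⟨i, -, hi⟩ := Finset.exists_max_image Finset.univ (fun i => |⟪X i, v⟫|)
    Finset.univ_nonempty
  have havg : ‖v‖ ^ 2 ≤ (∑ j, |u j|) * |⟪X i, v⟫| := by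
    calc ‖v‖ ^ 2 = ∑ j, u j * ⟪X j, v⟫ := by
          rw [← real_inner_self_eq_norm_sq, hv_def, applyX, sum_inner]
          simp only [real_inner_smul_left]
      _ ≤ ∑ j, |u j| * |⟪X i, v⟫| := Finset.sum_le_sum fun j _ => by
          refine (le_abs_self _).trans ?_
          rw [abs_mul]
          exact mul_le_mul_of_nonneg_left (hi j (Finset.mem_univ j)) (abs_nonneg _)
      _ = (∑ j, |u j|) * |⟪X i, v⟫| := (Finset.sum_mul ..).symm
  have hl1 : 0 ≤ ∑ j, |u j| := by positivity
  refine ⟨i, pos_of_mul_pos_right (hv.trans_le havg) hl1, fun j hj => ?_⟩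
  have hmo := mul_one_sub_le_norm_sq_sub_mul_abs_inner (c := ∑ j, |u j|)
    (α := √((k : ℝ) + 1)) (by positivity) hδ.1
    (by rw [Real.sq_sqrt (by positivity), add_sub_cancel_right]
        exact (sum_abs_sq_le_card_suppF_mul u).trans (by gcongr))
    (rip_smul_applyX_add_smul X hδ hcard hj)
  by_contra! h
  nlinarith [mul_pos (sum_sq_pos_of_ne_zero hu) (sub_pos.2 hδk),
    mul_le_mul_of_nonneg_left h hl1]

end applyX

def projResidual (X : Fin p → EuclideanSpace ℝ (Fin n)) (A : Finset (Fin p))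
    (y : EuclideanSpace ℝ (Fin n)) : EuclideanSpace ℝ (Fin n) :=
  y - (Submodule.span ℝ (X '' ↑A)).starProjection y

section projResidual

variable (X : Fin p → EuclideanSpace ℝ (Fin n)) (A : Finset (Fin p))

lemma ompResidual_eq_projResidual (y : EuclideanSpace ℝ (Fin n)) (t : ℕ → Fin p) (k : ℕ) :
    ompResidual X y t k = projResidual X (ompSupport t k) y :=
  rfl

lemma continuous_projResidual : Continuous (projResidual X A) :=
  continuous_id.sub (ContinuousLinearMap.continuous _)

lemma inner_projResidual_of_mem {i : Fin p} (hi : i ∈ A) (y : EuclideanSpace ℝ (Fin n)) :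
    ⟪X i, projResidual X A y⟫ = 0 := by
  rw [real_inner_comm]
  exact Submodule.starProjection_inner_eq_zero _ _ (Submodule.subset_span ⟨i, hi, rfl⟩)

lemma projResidual_applyX_of_suppF_subset {b : Fin p → ℝ} (hb : suppF b ⊆ A) :
    projResidual X A (applyX X b) = 0 :=
  sub_eq_zero.2 (Submodule.starProjection_eq_self_iff.2
    ((mem_span_image_iff_exists_applyX X).2 ⟨b, hb, rfl⟩)).symm

lemma exists_projResidual_applyX_eq {β : Fin p → ℝ} (hA : A ⊂ suppF β) :
    ∃ u, u ≠ 0 ∧ suppF u ⊆ suppF β ∧ projResidual X A (applyX X β) = applyX X u := by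
  obtain ⟨c, hcA, hc⟩ := (mem_span_image_iff_exists_applyX X).1
    (Submodule.starProjection_apply_mem (Submodule.span ℝ (X '' ↑A)) (applyX X β))
  have hc0 : ∀ i ∉ A, (β - c) i = β i := fun i hi => by
    simpa [mem_suppF] using mt (@hcA i) hi
  obtain ⟨i, hiβ, hiA⟩ := Finset.exists_of_ssubset hA
  refine ⟨β - c, fun h => ?_, fun j hj => ?_, by rw [projResidual, ← hc, applyX_sub]⟩
  · exact mem_suppF.1 hiβ (by rw [← hc0 i hiA, h, Pi.zero_apply])
  · by_cases hjA : j ∈ A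
    · exact hA.subset hjA
    · rw [mem_suppF, ← hc0 j hjA]
      exact mem_suppF.1 hj

variable {X A} {k : ℕ} {δ : ℝ} {β : Fin p → ℝ}

lemma projResidual_applyX_ne_zero (hδ : δ ∈ ripSet X k) (hδ1 : δ < 1)
    (hβ : (suppF β).card ≤ k) (hA : A ⊂ suppF β) : projResidual X A (applyX X β) ≠ 0 := by
  obtain ⟨u, hu, huβ, hr⟩ := exists_projResidual_applyX_eq X A hA
  rw [hr]
  exact applyX_ne_zero_of_mem_ripSet X hδ hδ1 hu ((Finset.card_le_card huβ).trans hβ)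

lemma exists_abs_inner_projResidual_gt (hδ : δ ∈ ripSet X (k + 1))
    (hδk : δ * √((k : ℝ) + 1) < 1) (hβ : (suppF β).card ≤ k) (hA : A ⊂ suppF β) :
    ∃ i, ∀ j ∉ suppF β \ A,
      |⟪X j, projResidual X A (applyX X β)⟫| < |⟪X i, projResidual X A (applyX X β)⟫| := by
  obtain ⟨u, hu, huβ, hr⟩ := exists_projResidual_applyX_eq X A hA
  obtain ⟨i, hi0, hi⟩ :=
    exists_abs_inner_applyX_gt X hδ hδk hu ((Finset.card_le_card huβ).trans hβ)
  refine ⟨i, fun j hj => ?_⟩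
  by_cases hjA : j ∈ A
  · rwa [inner_projResidual_of_mem X A hjA, abs_zero, hr]
  · rw [hr]
    exact hi j fun hju => hj (Finset.mem_sdiff.2 ⟨huβ hju, hjA⟩)

end projResidual

lemma eventually_maximizer_mem {ι α : Type*} [Finite ι] [TopologicalSpace α]
    {f : α → ι → ℝ} {x : α} (hf : ∀ j, ContinuousAt (fun y => f y j) x) {G : Set ι} {i : ι}
    (hi : ∀ j ∉ G, f x j < f x i) :
    ∀ᶠ y in 𝓝 x, ∀ τ, (∀ j, f y j ≤ f y τ) → τ ∈ G := by
  have hlt : ∀ᶠ y in 𝓝 x, ∀ j, j ∉ G → f y j < f y i :=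
    eventually_all.2 fun j => eventually_imp_distrib_left.2 fun hj =>
      (hf j).eventually_lt (hf i) (hi j hj)
  filter_upwards [hlt] with y hy τ hτ
  by_contra h
  exact (hτ i).not_gt (hy τ h)

lemma ompSupport_succ (t : ℕ → Fin p) (k : ℕ) :
    ompSupport t (k + 1) = insert (t k) (ompSupport t k) := by
  rw [ompSupport, ompSupport, Finset.range_add_one, Finset.image_insert]

section OMP

variable {X : Fin p → EuclideanSpace ℝ (Fin n)} {t : ℕ → Fin p}

lemma ompSupport_subset_and_card_eq {y : EuclideanSpace ℝ (Fin n)} {S : Finset (Fin p)}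
    (hstep : ∀ A ⊂ S, ∀ τ,
      (∀ j, |⟪X j, projResidual X A y⟫| ≤ |⟪X τ, projResidual X A y⟫|) → τ ∈ S \ A)
    (homp : IsOMP X y t) : ∀ k ≤ S.card, ompSupport t k ⊆ S ∧ (ompSupport t k).card = k := by
  intro k
  induction k with
  | zero => simp [ompSupport]
  | succ k ih =>
    intro hk
    obtain ⟨hsub, hcard⟩ := ih (by omega)
    have hss : ompSupport t k ⊂ S := ssubset_of_subset_of_ne hsub (by rintro rfl; omega)
    obtain ⟨htS, htA⟩ := Finset.mem_sdiff.1 (hstep _ hss (t k) (homp k))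
    rw [ompSupport_succ]
    exact ⟨Finset.insert_subset htS hsub, by rw [Finset.card_insert_of_notMem htA, hcard]⟩

lemma kmin_eq_of_ompSupport {β : Fin p → ℝ} {k0 kmax : ℕ} (hk0 : 1 ≤ k0) (hkmax : k0 ≤ kmax)
    (hβ : (suppF β).card = k0)
    (hsupp : ∀ k ≤ k0, ompSupport t k ⊆ suppF β ∧ (ompSupport t k).card = k) :
    kmin t β kmax = k0 := by
  refine le_antisymm (sInf_le ⟨k0, ⟨hk0, hkmax, ?_⟩, rfl⟩) (le_sInf ?_)
  · obtain ⟨hsub, hcard⟩ := hsupp k0 le_rfl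
    exact (Finset.eq_of_subset_of_card_le hsub (by rw [hcard, hβ])).symm.subset
  · rintro _ ⟨k, ⟨-, -, hk⟩, rfl⟩
    by_contra! hlt
    have hk' := (hsupp k (by exact_mod_cast hlt.le)).2
    have := Finset.card_le_card hk
    norm_cast at hlt
    omega

variable {k : ℕ} {δ : ℝ} {β : Fin p → ℝ}

lemma eventually_ompSupport_subset_and_card_eq (hδ : δ ∈ ripSet X (k + 1))
    (hδk : δ * √((k : ℝ) + 1) < 1) (hβ : (suppF β).card = k) :
    ∀ᶠ w in 𝓝 0, ∀ t, IsOMP X (applyX X β + w) t →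
      ∀ k' ≤ k, ompSupport t k' ⊆ suppF β ∧ (ompSupport t k').card = k' := by
  have hstep : ∀ᶠ w in 𝓝 (0 : EuclideanSpace ℝ (Fin n)), ∀ A ⊂ suppF β, ∀ τ,
      (∀ j, |⟪X j, projResidual X A (applyX X β + w)⟫| ≤
        |⟪X τ, projResidual X A (applyX X β + w)⟫|) → τ ∈ suppF β \ A := by
    refine eventually_all.2 fun A => eventually_imp_distrib_left.2 fun hA => ?_
    obtain ⟨i, hi⟩ := exists_abs_inner_projResidual_gt hδ hδk hβ.le hA
    refine eventually_maximizer_mem (fun j => ?_) (G := (↑(suppF β \ A) : Set (Fin p)))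
      (by simpa only [add_zero, Finset.mem_coe] using hi)
    exact (continuous_const.inner ((continuous_projResidual X A).comp
      (continuous_const_add _))).abs.continuousAt
  filter_upwards [hstep] with w hw t ht
  exact hβ ▸ ompSupport_subset_and_card_eq hw ht

lemma eventually_resRatio_lt (hδ : δ ∈ ripSet X (k + 1)) (hδk : δ * √((k : ℝ) + 1) < 1)
    (hβ : (suppF β).card = k) (hk : 1 ≤ k) {ε : ℝ} (hε : 0 < ε) :
    ∀ᶠ w in 𝓝 0, ∀ t, IsOMP X (applyX X β + w) t → resRatio X (applyX X β + w) t k < ε := by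
  -- `r^k` tends to `0` with the noise, while `r^{k-1}` stays away from `0`.
  have hratio : ∀ᶠ w in 𝓝 (0 : EuclideanSpace ℝ (Fin n)), ∀ A ⊂ suppF β,
      ‖projResidual X (suppF β) (applyX X β + w)‖ / ‖projResidual X A (applyX X β + w)‖ < ε := by
    refine eventually_all.2 fun A => eventually_imp_distrib_left.2 fun hA => ?_
    have hlim : ∀ B, Tendsto (fun w => ‖projResidual X B (applyX X β + w)‖) (𝓝 0)
        (𝓝 ‖projResidual X B (applyX X β)‖) := fun B => by
      simpa using ((continuous_projResidual X B).comp (continuous_const_add _)).norm.tendsto 0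
    have h0 := (hlim (suppF β)).div (hlim A) (norm_ne_zero_iff.2
      (projResidual_applyX_ne_zero hδ (lt_one_of_mul_sqrt_lt_one hδ.1 hδk) (by omega) hA))
    rw [projResidual_applyX_of_suppF_subset X _ subset_rfl, norm_zero, zero_div] at h0
    exact h0.eventually_lt_const hε
  filter_upwards [eventually_ompSupport_subset_and_card_eq hδ hδk hβ, hratio]
    with w hsupp hw t ht
  obtain ⟨hsubk, hcardk⟩ := hsupp t ht k le_rfl
  obtain ⟨hsub, hcard⟩ := hsupp t ht (k - 1) (by omega)
  have hSk : ompSupport t k = suppF β := Finset.eq_of_subset_of_card_le hsubk (by omega)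
  have hA : ompSupport t (k - 1) ⊂ suppF β :=
    ssubset_of_subset_of_ne hsub (by rintro h; rw [h] at hcard; omega)
  have := hw _ hA
  rwa [← hSk, ← ompResidual_eq_projResidual, ← ompResidual_eq_projResidual] at this

end OMP

lemma tendsto_map_smul_apply_of_mem_nhds {E : Type*} [NormedAddCommGroup E] [NormedSpace ℝ E]
    [MeasurableSpace E] [BorelSpace E] (μ : Measure E) [IsProbabilityMeasure μ] {s : Set E}
    (hs : s ∈ 𝓝 0) : Tendsto (fun σ : ℝ => μ.map (σ • ·) s) (𝓝[>] 0) (𝓝 1) := by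
  obtain ⟨r, hr, hball⟩ := Metric.mem_nhds_iff.1 hs
  have hballs : Tendsto (fun R : ℝ => μ (Metric.ball 0 R)) atTop (𝓝 1) := by
    have hU : ⋃ R : ℝ, Metric.ball (0 : E) R = Set.univ :=
      Set.eq_univ_of_forall fun x => Set.mem_iUnion.2 ⟨‖x‖ + 1, by simp⟩
    have := tendsto_measure_iUnion_atTop (μ := μ)
      fun _ _ h => Metric.ball_subset_ball (x := (0 : E)) h
    rwa [hU, measure_univ] at this
  have hscale : Tendsto (fun σ : ℝ => r / σ) (𝓝[>] 0) atTop := by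
    simpa only [div_eq_mul_inv] using tendsto_inv_nhdsGT_zero.const_mul_atTop hr
  refine tendsto_of_tendsto_of_tendsto_of_le_of_le' (hballs.comp hscale) tendsto_const_nhds
    ?_ (Eventually.of_forall fun σ => ?_)
  · filter_upwards [self_mem_nhdsWithin] with σ (hσ : 0 < σ)
    have hsub : Metric.ball 0 (r / σ) ⊆ (σ • ·) ⁻¹' s := fun x hx => hball (by
      rw [mem_ball_zero_iff] at hx ⊢
      rw [norm_smul, Real.norm_of_nonneg hσ.le]
      exact (lt_div_iff₀' hσ).1 hx)
    exact (measure_mono hsub).trans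
      (Measure.le_map_apply (measurable_const_smul σ).aemeasurable s)
  · have := Measure.isProbabilityMeasure_map (μ := μ) (measurable_const_smul σ).aemeasurable
    exact prob_le_one

def stdNoise (n : ℕ) : Measure (EuclideanSpace ℝ (Fin n)) :=
  (Measure.pi fun _ : Fin n => gaussianReal 0 1).map (MeasurableEquiv.toLp 2 (Fin n → ℝ))

instance (n : ℕ) : IsProbabilityMeasure (stdNoise n) :=
  Measure.isProbabilityMeasure_map (MeasurableEquiv.toLp 2 (Fin n → ℝ)).measurable.aemeasurable

lemma noise_eq_map_smul (n : ℕ) (σ : ℝ) : noise n σ = (stdNoise n).map (σ • ·) := by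
  have : ∀ _ : Fin n, SigmaFinite ((gaussianReal 0 1).map (σ * ·)) := fun _ => by
    rw [gaussianReal_map_const_mul]
    infer_instance
  have hpi := Measure.pi_map_pi (μ := fun _ : Fin n => gaussianReal 0 1)
    fun _ => (measurable_const_mul σ).aemeasurable
  rw [gaussianReal_map_const_mul, mul_zero, mul_one] at hpi
  -- `rfl` bridges the variance `⟨σ ^ 2, _⟩` of `noise`, which elaborates at type
  -- `{r // 0 ≤ r}` rather than `ℝ≥0`, so that `rw` cannot see it.
  calc noise n σ = ((Measure.pi fun _ : Fin n => gaussianReal 0 1).map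
        (fun x i => σ * x i)).map (MeasurableEquiv.toLp 2 (Fin n → ℝ)) := by rw [hpi]; rfl
    _ = (stdNoise n).map (σ • ·) := by
      rw [stdNoise, Measure.map_map (MeasurableEquiv.measurable _) (by fun_prop),
        Measure.map_map (measurable_const_smul σ) (MeasurableEquiv.measurable _)]
      rfl

lemma tendsto_noise_setOf_of_eventually {n : ℕ} {P : EuclideanSpace ℝ (Fin n) → Prop}
    (hP : ∀ᶠ w in 𝓝 0, P w) :
    Tendsto (fun σ : ℝ => (noise n σ {w | P w}).toReal) (𝓝[>] 0) (𝓝 1) := by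
  have h := tendsto_map_smul_apply_of_mem_nhds (stdNoise n) hP
  simp_rw [← noise_eq_map_smul] at h
  have := (ENNReal.tendsto_toReal ENNReal.one_ne_top).comp h
  rwa [ENNReal.toReal_one] at this

theorem statement_5_general {n p k0 kmax : ℕ} (hk0 : 1 ≤ k0)
    (hkmax : k0 ≤ kmax)
    (X : Fin p → EuclideanSpace ℝ (Fin n))
    (β : Fin p → ℝ) (hβ : (suppF β).card = k0)
    (T : EuclideanSpace ℝ (Fin n) → ℕ → Fin p)
    (hT : ∀ w, IsOMP X (applyX X β + w) (T w))
    (hRIC : RIC X (k0 + 1) < 1 / Real.sqrt ((k0 : ℝ) + 1)) :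
    Filter.Tendsto
        (fun σ : ℝ => (noise n σ {w | kmin (T w) β kmax = (k0 : ℕ∞)}).toReal)
        (nhdsWithin 0 (Set.Ioi 0)) (nhds 1) ∧
      ∀ ε : ℝ, 0 < ε →
        Filter.Tendsto
          (fun σ : ℝ =>
            (noise n σ {w | resRatio X (applyX X β + w) (T w) k0 < ε}).toReal)
          (nhdsWithin 0 (Set.Ioi 0)) (nhds 1) := by
  obtain ⟨δ, hδ, hδlt⟩ := exists_mem_ripSet_lt X hRIC
  have hδk : δ * √((k0 : ℝ) + 1) < 1 := by
    rwa [lt_div_iff₀ (by positivity)] at hδlt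
  refine ⟨tendsto_noise_setOf_of_eventually ?_, fun ε hε => tendsto_noise_setOf_of_eventually ?_⟩
  · filter_upwards [eventually_ompSupport_subset_and_card_eq hδ hδk hβ] with w hw
    exact kmin_eq_of_ompSupport hk0 hkmax hβ (hw (T w) (hT w))
  · filter_upwards [eventually_resRatio_lt hδ hδk hβ hk0 hε] with w hw
    exact hw (T w) (hT w)

/-- If `δ_{k0+1} < 1/√(k0+1)`, then `P(k_min = k0) → 1` as `σ → 0⁺`,
and `RR(k0) → 0` in probability as `σ → 0⁺`. -/
theorem statement_5 {n p k0 kmax : ℕ} (hnp : n < p) (hk0 : 1 ≤ k0)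
    (hkmax : k0 ≤ kmax) (hkmaxn : kmax < n)
    (X : Fin p → EuclideanSpace ℝ (Fin n)) (hX : ∀ j, ‖X j‖ = 1)
    (β : Fin p → ℝ) (hβ : (suppF β).card = k0)
    (T : EuclideanSpace ℝ (Fin n) → ℕ → Fin p)
    (hT : ∀ w, IsOMP X (applyX X β + w) (T w))
    (hRIC : RIC X (k0 + 1) < 1 / Real.sqrt ((k0 : ℝ) + 1)) :
    Filter.Tendsto
        (fun σ : ℝ => (noise n σ {w | kmin (T w) β kmax = (k0 : ℕ∞)}).toReal)
        (nhdsWithin 0 (Set.Ioi 0)) (nhds 1) ∧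
      ∀ ε : ℝ, 0 < ε →
        Filter.Tendsto
          (fun σ : ℝ =>
            (noise n σ {w | resRatio X (applyX X β + w) (T w) k0 < ε}).toReal)
          (nhdsWithin 0 (Set.Ioi 0)) (nhds 1) :=
  statement_5_general hk0 hkmax X β hβ T hT hRIC

end RRTPaper
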